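/- For the house allocation constraint and any initial ownership structure μ⁰, the top trading cycles mechanism TTC_{μ⁰} is a local priority mechanism: there exists an implementable local compromiser assignment α for the house allocation constraint with LP_α = TTC_{μ⁰}. -/

import Mathlib

/- Common framework: constrained allocation, local priority mechanisms
   (Root & Ahn, "Local Priority Mechanisms"). Agents `N`, objects `O`.
   A strict preference is encoded as a `LinearOrder` on `O`, where
   `pi.lt b a` means `a` is strictly preferred to `b`. -/

open Classical

noncomputable section

variable {N O : Type}

/-- `a` is strictly preferred to `b` under `pi`. -/
def sPref (pi : LinearOrder O) (a b : O) : Prop := pi.lt b a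

/-- `a` is weakly preferred to `b` under `pi`. -/
def wPref (pi : LinearOrder O) (a b : O) : Prop := a = b ∨ pi.lt b a

/-- The favourite (top-ranked) object under `pi`. -/
def topObj [Fintype O] [Nonempty O] (pi : LinearOrder O) : O :=
  @Finset.max' O pi Finset.univ Finset.univ_nonempty

/-- `tau1 p` is the allocation assigning each agent her favourite object. -/
def tau1 [Fintype O] [Nonempty O] (p : N → LinearOrder O) : N → O :=
  fun i => topObj (p i)

/-- The strict lower contour set of `a` under `pi`, as a finset. -/
def LCfin [Fintype O] (pi : LinearOrder O) (a : O) : Finset O :=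
  Finset.univ.filter fun b => pi.lt b a

/-- The best element of the strict lower contour set of `a` (junk value `a` if empty). -/
def bestLC [Fintype O] (pi : LinearOrder O) (a : O) : O :=
  if h : (LCfin pi a).Nonempty then @Finset.max' O pi _ h else a

/-- At `x`, no local compromiser has an empty strict lower contour set. -/
def lpNoFail [Fintype O] (α : (N → O) → Set N) (p : N → LinearOrder O) (x : N → O) : Prop :=
  ∀ i ∈ α x, (LCfin (p i) (x i)).Nonempty

/-- One step of the local priority algorithm: all local compromisers move to their
next-favourite object, everyone else stays put. -/
def lpStep [Fintype O] (α : (N → O) → Set N) (p : N → LinearOrder O) (x : N → O) : N → O :=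
  fun k => if k ∈ α x then bestLC (p k) (x k) else x k

/-- The local priority algorithm for `α` at profile `p` terminates (without failure)
returning the feasible allocation `y`. -/
def lpRunsTo [Fintype O] [Nonempty O] (C : Set (N → O)) (α : (N → O) → Set N)
    (p : N → LinearOrder O) (y : N → O) : Prop :=
  ∃ (m : ℕ) (x : ℕ → N → O),
    x 0 = tau1 p ∧
    (∀ t < m, x t ∉ C ∧ lpNoFail α p (x t) ∧ x (t + 1) = lpStep α p (x t)) ∧
    x m = y ∧ y ∈ C

/-- `α` is a local compromiser assignment for the constraint `C`. -/
def IsLCA (C : Set (N → O)) (α : (N → O) → Set N) : Prop :=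
  ∀ x, (x ∉ C → (α x).Nonempty) ∧ (x ∈ C → α x = ∅)

/-- `α` is implementable: the local priority algorithm returns a feasible
allocation (never the failure symbol) on every profile. -/
def lpImplementable [Fintype O] [Nonempty O] (C : Set (N → O)) (α : (N → O) → Set N) : Prop :=
  ∀ p : N → LinearOrder O, ∃ y, lpRunsTo C α p y

/-- `α` is an implementable local compromiser assignment for `C` inducing the mechanism `f`,
i.e. `f = LP_α`. -/
def lpInduces [Fintype O] [Nonempty O] (C : Set (N → O)) (α : (N → O) → Set N)
    (f : (N → LinearOrder O) → N → O) : Prop :=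
  IsLCA C α ∧ ∀ p, lpRunsTo C α p (f p)

/-- The local priority mechanism `LP_α` (well defined whenever `α` is implementable,
since the algorithm is deterministic). -/
def LPmech [Fintype O] [Nonempty O] (C : Set (N → O)) (α : (N → O) → Set N)
    (p : N → LinearOrder O) : N → O :=
  if h : ∃ y, lpRunsTo C α p y then h.choose else fun _ => Classical.arbitrary O

/-- Group strategy-proofness. -/
def GSP (f : (N → LinearOrder O) → N → O) : Prop :=
  ∀ (p p' : N → LinearOrder O) (M : Set N), M.Nonempty → (∀ j ∉ M, p' j = p j) →
    ¬ ((∀ j ∈ M, wPref (p j) (f p' j) (f p j)) ∧ ∃ k ∈ M, sPref (p k) (f p' k) (f p k))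

/-- (Individual) strategy-proofness. -/
def StratProof (f : (N → LinearOrder O) → N → O) : Prop :=
  ∀ (p p' : N → LinearOrder O) (i : N), (∀ j, j ≠ i → p' j = p j) →
    ¬ sPref (p i) (f p' i) (f p i)

/-- Nonbossiness. -/
def Nonbossy (f : (N → LinearOrder O) → N → O) : Prop :=
  ∀ (p p' : N → LinearOrder O) (i : N), (∀ j, j ≠ i → p' j = p j) →
    f p' i = f p i → f p' = f p

/-- Maskin monotonicity. -/
def MaskinMono (f : (N → LinearOrder O) → N → O) : Prop :=
  ∀ p p' : N → LinearOrder O,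
    (∀ (i : N) (b : O), (p i).lt b (f p i) → (p' i).lt b (f p i)) → f p' = f p

/-- Unanimity. -/
def Unanimity [Fintype O] [Nonempty O] (C : Set (N → O))
    (f : (N → LinearOrder O) → N → O) : Prop :=
  ∀ p, tau1 p ∈ C → f p = tau1 p

/-- The Fixed compromiser condition. -/
def FixedComp [Fintype O] [Nonempty O] (C : Set (N → O))
    (f : (N → LinearOrder O) → N → O) : Prop :=
  ∀ μ, μ ∉ C → ∃ i : N, ∀ p, tau1 p = μ → f p i ≠ μ i

/-- `pi'` is obtained from `pi` by moving `c` to the bottom of the ranking. -/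
def MoveBottom (pi pi' : LinearOrder O) (c : O) : Prop :=
  (∀ b, b ≠ c → pi'.lt c b) ∧ (∀ a b, a ≠ c → b ≠ c → (pi'.lt a b ↔ pi.lt a b))

/-- Compromiser invariance. -/
def CompInv [Fintype O] [Nonempty O] (C : Set (N → O))
    (f : (N → LinearOrder O) → N → O) : Prop :=
  ∀ μ, μ ∉ C → ∀ p p' : N → LinearOrder O, tau1 p = μ →
    (∀ i, (∀ q, tau1 q = μ → f q i ≠ μ i) → MoveBottom (p i) (p' i) (μ i)) →
    (∀ i, ¬ (∀ q, tau1 q = μ → f q i ≠ μ i) → p' i = p i) →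
    f p' = f p

/-- Pareto efficiency relative to the constraint `C`. -/
def ParetoEff (C : Set (N → O)) (f : (N → LinearOrder O) → N → O) : Prop :=
  ∀ p, ¬ ∃ ν ∈ C, (∀ i, wPref (p i) (ν i) (f p i)) ∧ ∃ k, sPref (p k) (ν k) (f p k)

/-- `diffSet x y = d(x,y)`, the set of agents on which `x` and `y` differ. -/
def diffSet (x y : N → O) : Set N := {i | x i ≠ y i}

/-- Forward consistency. -/
def ForwardCons (α : (N → O) → Set N) : Prop :=
  ∀ x y : N → O, diffSet x y ⊆ α x → α x \ diffSet x y ⊆ α y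

/-- The sequence of allocations `z 0, …, z m` is acyclic. -/
def AcyclicSeq (z : ℕ → N → O) (m : ℕ) : Prop :=
  ∀ (i : N) (r s t : ℕ), r < s → s < t → t ≤ m → z r i = z t i → z s i = z r i

/-- `x` and `y` are `i`-connected under `α`. -/
def IConn (α : (N → O) → Set N) (i : N) (x y : N → O) : Prop :=
  ∃ m : ℕ, 1 ≤ m ∧ ∃ z : ℕ → N → O,
    z 0 = x ∧ z m = y ∧ AcyclicSeq z m ∧ diffSet (z 0) (z 1) = {i} ∧
    ∀ l < m, diffSet (z l) (z (l + 1)) ⊆ α (z l)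

/-- Backward consistency. -/
def BackCons (C : Set (N → O)) (α : (N → O) → Set N) : Prop :=
  ∀ (i : N) (x y : N → O), x ∉ C → y ∉ C → IConn α i x y →
    ∀ x' : N → O, diffSet x x' ⊆ α y → i ∉ diffSet x x' → i ∈ α x'

/-- The pointwise union of all implementable local compromiser assignments inducing `f`. -/
def alphaUnionAll [Fintype O] [Nonempty O] (C : Set (N → O))
    (f : (N → LinearOrder O) → N → O) : (N → O) → Set N :=
  fun x => {i | ∃ β, lpInduces C β f ∧ i ∈ β x}

end

noncomputable section

variable {N O : Type}

/-- The best element of a set `S` of objects under `pi` (junk value if `S` is empty). -/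
def bestIn [Fintype O] [Nonempty O] (pi : LinearOrder O) (S : Set O) : O :=
  if h : (Finset.univ.filter fun o : O => o ∈ S).Nonempty
  then @Finset.max' O pi _ h else Classical.arbitrary O

/-- In top trading cycles with endowment `μ0`, a remaining agent `i` (the set of
remaining agents being `A`) points to the agent endowed with her favourite remaining
object. -/
def ttcPtr [Fintype O] [Nonempty O] (μ0 : N ≃ O) (p : N → LinearOrder O)
    (A : Set N) (i : N) : N :=
  μ0.symm (bestIn (p i) (μ0 '' A))

/-- The top trading cycles algorithm with initial ownership `μ0` at profile `p`
terminates with allocation `x`: in each round the agents lying on a cycle of the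
pointing map trade along the cycle (each receiving the object of the agent she points
to) and leave; this repeats until no agents remain. -/
def TTCRuns [Fintype O] [Nonempty O] (μ0 : N ≃ O) (p : N → LinearOrder O)
    (x : N → O) : Prop :=
  ∃ (m : ℕ) (A : ℕ → Set N),
    A 0 = Set.univ ∧ A m = ∅ ∧
    ∀ t < m,
      A (t + 1) = A t \ {i : N | i ∈ A t ∧ ∃ k > 0, (ttcPtr μ0 p (A t))^[k] i = i} ∧
      ∀ i ∈ A t, (∃ k > 0, (ttcPtr μ0 p (A t))^[k] i = i) →
        x i = μ0 (ttcPtr μ0 p (A t) i)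

end

/-!
Take as local compromisers at `x` the agents that are not on a cycle of the pointing map
`i ↦ μ0⁻¹ (x i)` but point at an agent on a cycle. Started at `τ₁`, the local priority algorithm
keeps two facts: every object an agent prefers to her current one is owned by an agent on a cycle,
and agents on a cycle already hold their TTC object. Agents on a cycle never move, so cycles
persist. A newly closed cycle consists of agents whose current objects are their favourites
among those whose owners are not yet on a cycle; following the TTC rounds, such a cycle is traded
as a whole in the first round that removes one of its members, so it too holds the TTC objects.
Compromisers exist as long as the allocation is not a bijection, and each step strictly shrinks
the total size of the strict lower contour sets, so the algorithm ends at the TTC allocation.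
-/

open Function Set

theorem Nat.exists_lt_not_and_succ {p : ℕ → Prop} {m : ℕ} (h0 : ¬ p 0) (hm : p m) :
    ∃ t < m, ¬ p t ∧ p (t + 1) := by
  induction m with
  | zero => exact absurd hm h0
  | succ m ih =>
    by_cases h : p m
    · obtain ⟨t, ht, hpt⟩ := ih h
      exact ⟨t, by omega, hpt⟩
    · exact ⟨m, by omega, h, hm⟩

namespace Function

variable {α : Type*} {f g : α → α} {x : α}

theorem exists_iterate_mem_periodicPts [Finite α] (f : α → α) (x : α) :
    ∃ k, f^[k] x ∈ periodicPts f := by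
  obtain ⟨s, t, hst, heq⟩ := Finite.exists_ne_map_eq_of_infinite (fun k => f^[k] x)
  wlog hlt : s < t generalizing s t
  · exact this t s hst.symm heq.symm (by omega)
  refine ⟨s, mk_mem_periodicPts (n := t - s) (by omega) ?_⟩
  change f^[t - s] (f^[s] x) = f^[s] x
  rw [← iterate_add_apply, Nat.sub_add_cancel hlt.le]
  exact heq.symm

theorem mem_of_iterate_mem_of_mapsTo {S : Set α} (hS : MapsTo f S S) (hx : x ∈ periodicPts f)
    {k : ℕ} (hk : f^[k] x ∈ S) : x ∈ S := by
  obtain ⟨n, hn, hxn⟩ := hx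
  have hreturn : f^[n * (k + 1) - k] (f^[k] x) = x := by
    rw [← iterate_add_apply, Nat.sub_add_cancel (by nlinarith)]
    exact (hxn.mul_const (k + 1)).eq
  exact hreturn ▸ hS.iterate _ hk

theorem periodicPts_subset_of_eqOn (h : EqOn g f (periodicPts f)) :
    periodicPts f ⊆ periodicPts g := by
  rintro x ⟨n, hn, hx⟩
  have hiter : ∀ k, g^[k] x = f^[k] x := by
    intro k
    induction k with
    | zero => rfl
    | succ k ih =>
      rw [iterate_succ_apply', iterate_succ_apply', ih]
      exact h (mk_mem_periodicPts hn (hx.apply_iterate k))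
  exact ⟨n, hn, (hiter n).trans hx⟩

end Function

section Preferences

variable {O : Type} [Fintype O] {pi : LinearOrder O} {a b : O}

theorem not_topObj_lt [Nonempty O] (pi : LinearOrder O) (b : O) : ¬ pi.lt (topObj pi) b :=
  let _ := pi
  (Finset.le_max' _ b (Finset.mem_univ b)).not_gt

theorem mem_LCfin : b ∈ LCfin pi a ↔ pi.lt b a := by
  simp [LCfin]

theorem bestLC_lt (h : (LCfin pi a).Nonempty) : pi.lt (bestLC pi a) a := by
  rw [bestLC, dif_pos h, ← mem_LCfin]
  exact @Finset.max'_mem O pi _ h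

theorem eq_or_lt_of_bestLC_lt (hb : pi.lt (bestLC pi a) b) : b = a ∨ pi.lt a b := by
  let _ := pi
  by_cases h : (LCfin pi a).Nonempty
  · refine or_iff_not_imp_right.mpr fun hab => ((not_lt.mp hab).lt_or_eq).resolve_left ?_
    intro hba
    rw [bestLC, dif_pos h] at hb
    exact (Finset.le_max' _ b (mem_LCfin.mpr hba)).not_gt hb
  · rw [bestLC, dif_neg h] at hb
    exact Or.inr hb

theorem LCfin_bestLC_ssubset (h : (LCfin pi a).Nonempty) :
    LCfin pi (bestLC pi a) ⊂ LCfin pi a := by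
  let _ := pi
  refine (Finset.ssubset_iff_of_subset fun b hb => ?_).mpr
    ⟨bestLC pi a, mem_LCfin.mpr (bestLC_lt h), fun hmem => lt_irrefl _ (mem_LCfin.mp hmem)⟩
  exact mem_LCfin.mpr ((mem_LCfin.mp hb).trans (bestLC_lt h))

theorem bestIn_mem [Nonempty O] {S : Set O} (hS : S.Nonempty) : bestIn pi S ∈ S := by
  have hne : (Finset.univ.filter fun o : O => o ∈ S).Nonempty :=
    let ⟨o, ho⟩ := hS; ⟨o, by simpa using ho⟩
  rw [bestIn, dif_pos hne]
  simpa using @Finset.max'_mem O pi _ hne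

theorem le_bestIn [Nonempty O] {S : Set O} (hb : b ∈ S) : pi.le b (bestIn pi S) := by
  have hne : (Finset.univ.filter fun o : O => o ∈ S).Nonempty := ⟨b, by simpa using hb⟩
  rw [bestIn, dif_pos hne]
  exact @Finset.le_max' O pi _ b (by simpa using hb)

end Preferences

section LocalPriority

variable {N O : Type} [Fintype O] {α : (N → O) → Set N} {p : N → LinearOrder O}
  {x : N → O} {i : N}

theorem lpStep_of_mem (h : i ∈ α x) : lpStep α p x i = bestLC (p i) (x i) := if_pos h

theorem lpStep_of_notMem (h : i ∉ α x) : lpStep α p x i = x i := if_neg h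

def lpPotential [Fintype N] (p : N → LinearOrder O) (x : N → O) : ℕ :=
  ∑ i, (LCfin (p i) (x i)).card

theorem lpPotential_lpStep_lt [Fintype N] (hfail : lpNoFail α p x) (hα : (α x).Nonempty) :
    lpPotential p (lpStep α p x) < lpPotential p x := by
  have hdrop : ∀ i ∈ α x, (LCfin (p i) (lpStep α p x i)).card < (LCfin (p i) (x i)).card :=
    fun i hi => by
      rw [lpStep_of_mem hi]
      exact Finset.card_lt_card (LCfin_bestLC_ssubset (hfail i hi))
  refine Finset.sum_lt_sum (fun i _ => ?_) ?_
  · by_cases hi : i ∈ α x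
    · exact (hdrop i hi).le
    · rw [lpStep_of_notMem hi]
  · obtain ⟨i, hi⟩ := hα
    exact ⟨i, Finset.mem_univ i, hdrop i hi⟩

theorem lpRunsTo_of_invariant [Fintype N] [Nonempty O] {C : Set (N → O)} {y : N → O}
    (hα : ∀ x, x ∉ C → (α x).Nonempty) (I : (N → O) → Prop) (h0 : I (tau1 p))
    (hstep : ∀ x, I x → I (lpStep α p x)) (hfail : ∀ x, I x → lpNoFail α p x)
    (hfeas : ∀ x, I x → x ∈ C → x = y) : lpRunsTo C α p y := by
  set X : ℕ → N → O := fun k => (lpStep α p)^[k] (tau1 p)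
  have hX : ∀ k, I (X k) := Iterate.rec I h0 hstep
  have hsucc : ∀ k, X (k + 1) = lpStep α p (X k) := fun k => iterate_succ_apply' _ k _
  have hex : ∃ k, X k ∈ C := by
    obtain ⟨k, hk⟩ := WellFounded.not_rel_apply_succ (r := (· < ·)) fun k => lpPotential p (X k)
    refine ⟨k, by_contra fun hkC => hk ?_⟩
    rw [hsucc]
    exact lpPotential_lpStep_lt (hfail _ (hX k)) (hα _ hkC)
  have hy : X (Nat.find hex) = y := hfeas _ (hX _) (Nat.find_spec hex)
  exact ⟨Nat.find hex, X, rfl,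
    fun t ht => ⟨Nat.find_min hex ht, hfail _ (hX t), hsucc t⟩, hy, hy ▸ Nat.find_spec hex⟩

end LocalPriority

namespace HouseAllocation

variable {N O : Type} {μ0 : N ≃ O} {p : N → LinearOrder O} {x y T : N → O}

def pointing (μ0 : N ≃ O) (x : N → O) (i : N) : N := μ0.symm (x i)

abbrev cyclic (μ0 : N ≃ O) (x : N → O) : Set N := periodicPts (pointing μ0 x)

def compromisers (μ0 : N ≃ O) (x : N → O) : Set N :=
  {i | i ∉ cyclic μ0 x ∧ pointing μ0 x i ∈ cyclic μ0 x}

theorem bijective_iff_cyclic_eq_univ [Finite N] : Bijective x ↔ cyclic μ0 x = univ := by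
  rw [← injective_iff_periodicPts_eq_univ, Finite.injective_iff_bijective,
    ← μ0.symm.comp_bijective]
  rfl

theorem compromisers_eq_empty [Finite N] (hx : Bijective x) : compromisers μ0 x = ∅ := by
  rw [bijective_iff_cyclic_eq_univ (μ0 := μ0)] at hx
  simp [compromisers, hx]

theorem compromisers_nonempty [Finite N] (hx : ¬ Bijective x) :
    (compromisers μ0 x).Nonempty := by
  obtain ⟨i, hi⟩ : ∃ i, i ∉ cyclic μ0 x := by
    by_contra! h
    exact hx (bijective_iff_cyclic_eq_univ.mpr (eq_univ_of_forall h))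
  obtain ⟨k, hk⟩ := exists_iterate_mem_periodicPts (pointing μ0 x) i
  obtain ⟨r, -, hr, hr1⟩ :=
    Nat.exists_lt_not_and_succ (p := fun r => (pointing μ0 x)^[r] i ∈ cyclic μ0 x) hi hk
  exact ⟨_, hr, by rwa [iterate_succ_apply'] at hr1⟩

theorem isLCA_compromisers [Finite N] (μ0 : N ≃ O) :
    IsLCA {x : N → O | Bijective x} (compromisers μ0) :=
  fun _ => ⟨compromisers_nonempty, compromisers_eq_empty⟩

structure TTCInvariant (μ0 : N ≃ O) (p : N → LinearOrder O) (T x : N → O) : Prop where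
  owner_mem_cyclic : ∀ i b, (p i).lt (x i) b → μ0.symm b ∈ cyclic μ0 x
  eq_of_mem_cyclic : ∀ i ∈ cyclic μ0 x, x i = T i

theorem TTCInvariant.eq_of_bijective [Finite N] (h : TTCInvariant μ0 p T x)
    (hx : Bijective x) : x = T :=
  funext fun i => h.eq_of_mem_cyclic i (bijective_iff_cyclic_eq_univ.mp hx ▸ mem_univ i)

section LocalPriority

variable [Fintype O]

theorem lpStep_compromisers_of_mem_cyclic {i : N} (hi : i ∈ cyclic μ0 x) :
    lpStep (compromisers μ0) p x i = x i :=
  lpStep_of_notMem fun h => h.1 hi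

theorem pointing_lpStep_of_mem_cyclic {i : N} (hi : i ∈ cyclic μ0 x) :
    pointing μ0 (lpStep (compromisers μ0) p x) i = pointing μ0 x i :=
  congrArg μ0.symm (lpStep_compromisers_of_mem_cyclic hi)

theorem cyclic_subset_cyclic_lpStep :
    cyclic μ0 x ⊆ cyclic μ0 (lpStep (compromisers μ0) p x) :=
  periodicPts_subset_of_eqOn fun _ hi => pointing_lpStep_of_mem_cyclic hi

theorem TTCInvariant.owner_mem_cyclic_of_lt_lpStep (h : TTCInvariant μ0 p T x) {i : N} {b : O}
    (hb : (p i).lt (lpStep (compromisers μ0) p x i) b) : μ0.symm b ∈ cyclic μ0 x := by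
  by_cases hi : i ∈ compromisers μ0 x
  · rw [lpStep_of_mem hi] at hb
    rcases eq_or_lt_of_bestLC_lt hb with rfl | hlt
    · exact hi.2
    · exact h.owner_mem_cyclic i b hlt
  · rw [lpStep_of_notMem hi] at hb
    exact h.owner_mem_cyclic i b hb

theorem TTCInvariant.lpNoFail_compromisers (h : TTCInvariant μ0 p T x) :
    lpNoFail (compromisers μ0) p x := by
  intro i hi
  by_contra hempty
  have hall : ∀ j, j ∈ cyclic μ0 x := by
    intro j
    by_cases hj : μ0 j = x i
    · have hji : j = pointing μ0 x i := by rw [pointing, ← hj, Equiv.symm_apply_apply]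
      exact hji ▸ hi.2
    · have hlt : (p i).lt (x i) (μ0 j) := by
        let _ := p i
        exact lt_of_le_of_ne (not_lt.mp fun h => hempty ⟨μ0 j, mem_LCfin.mpr h⟩) (Ne.symm hj)
      simpa using h.owner_mem_cyclic i _ hlt
  exact hi.1 (hall i)

end LocalPriority

section TopTradingCycles

variable [Fintype O] [Nonempty O]

theorem ttcPtr_mem {A : Set N} (hA : A.Nonempty) (i : N) : ttcPtr μ0 p A i ∈ A := by
  obtain ⟨a, ha, hbest⟩ := bestIn_mem (pi := p i) (hA.image μ0)
  rw [ttcPtr, ← hbest, Equiv.symm_apply_apply]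
  exact ha

/-- If `w`'s favourite remaining object were better than `y w`, its owner would lie in `F`, and
the trading cycle through `w` would then stay inside `F`, since an agent of `F` trading in this
round gets `T f = y f` and so points along `pointing μ0 y`. -/
theorem ttcPtr_eq_pointing {A F : Set N}
    (hround : ∀ i ∈ A, i ∈ periodicPts (ttcPtr μ0 p A) → T i = μ0 (ttcPtr μ0 p A i))
    (hFT : ∀ f ∈ F, y f = T f) (hF : MapsTo (pointing μ0 y) F F) {w : N}
    (hpref : ∀ b, (p w).lt (y w) b → μ0.symm b ∈ F) (hwF : w ∉ F) (hwA : w ∈ A)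
    (hgw : pointing μ0 y w ∈ A) (hw : w ∈ periodicPts (ttcPtr μ0 p A)) :
    ttcPtr μ0 p A w = pointing μ0 y w := by
  set s := ttcPtr μ0 p A
  have hA : A.Nonempty := ⟨w, hwA⟩
  by_contra hne
  have hbetter : (p w).lt (y w) (bestIn (p w) (μ0 '' A)) := by
    let _ := p w
    refine lt_of_le_of_ne (le_bestIn ⟨_, hgw, μ0.apply_symm_apply _⟩) fun h => hne ?_
    change μ0.symm _ = μ0.symm (y w)
    rw [← h]
  have hclosed : MapsTo s (F ∩ A ∩ periodicPts s) (F ∩ A ∩ periodicPts s) := by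
    rintro f ⟨⟨hfF, hfA⟩, hf⟩
    have hsf : s f = pointing μ0 y f := by
      rw [pointing, hFT f hfF, hround f hfA hf, Equiv.symm_apply_apply]
    exact ⟨⟨hsf ▸ hF hfF, ttcPtr_mem hA f⟩, (bijOn_periodicPts s).mapsTo hf⟩
  exact hwF (mem_of_iterate_mem_of_mapsTo (k := 1) hclosed hw
    ⟨⟨hpref _ hbetter, ttcPtr_mem hA w⟩, (bijOn_periodicPts s).mapsTo hw⟩).1.1

/-- In the first round `t` in which a member of the cycle of `pointing μ0 y` through `j` leaves,
all members still remain, so by `ttcPtr_eq_pointing` the whole cycle trades along `y`. -/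
theorem _root_.TTCRuns.eq_of_mem_cyclic {F : Set N} (hrun : TTCRuns μ0 p T)
    (hFT : ∀ f ∈ F, y f = T f) (hF : MapsTo (pointing μ0 y) F F)
    (hpref : ∀ j b, (p j).lt (y j) b → μ0.symm b ∈ F) {j : N} (hj : j ∈ cyclic μ0 y) :
    y j = T j := by
  by_cases hjF : j ∈ F
  · exact hFT j hjF
  obtain ⟨m, A, hA0, hAm, hstep⟩ := hrun
  set g := pointing μ0 y
  have horbitF : ∀ r, g^[r] j ∉ F := fun r h => hjF (mem_of_iterate_mem_of_mapsTo hF hj h)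
  obtain ⟨t, htm, horbitA, k, hk⟩ :=
    Nat.exists_lt_not_and_succ (p := fun t => ∃ k, g^[k] j ∉ A t) (m := m) (by simp [hA0])
      ⟨0, by simp [hAm]⟩
  push Not at horbitA
  obtain ⟨hAsucc, hround⟩ := hstep t htm
  set s := ttcPtr μ0 p (A t)
  have hs : ∀ r, g^[r] j ∈ periodicPts s → s (g^[r] j) = g (g^[r] j) := fun r hr =>
    ttcPtr_eq_pointing hround hFT hF (hpref _) (horbitF r) (horbitA r)
      (by simpa only [iterate_succ_apply'] using horbitA (r + 1)) hr
  have hclosed :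
      MapsTo g (range (g^[·] j) ∩ periodicPts s) (range (g^[·] j) ∩ periodicPts s) := by
    rintro _ ⟨⟨r, rfl⟩, hr⟩
    exact ⟨⟨r + 1, iterate_succ_apply' g r j⟩, hs r hr ▸ (bijOn_periodicPts s).mapsTo hr⟩
  have hks : g^[k] j ∈ periodicPts s := by
    rw [hAsucc] at hk
    by_contra hnot
    exact hk ⟨horbitA k, fun hmem => hnot hmem.2⟩
  have hjs : j ∈ periodicPts s := (mem_of_iterate_mem_of_mapsTo hclosed hj ⟨⟨k, rfl⟩, hks⟩).2
  rw [hround j (horbitA 0) hjs, show s j = g j from hs 0 hjs]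
  exact (μ0.apply_symm_apply _).symm

theorem ttcInvariant_tau1 (hrun : TTCRuns μ0 p T) : TTCInvariant μ0 p T (tau1 p) where
  owner_mem_cyclic i b := (not_topObj_lt (p i) b).elim
  eq_of_mem_cyclic _ hi := hrun.eq_of_mem_cyclic (F := ∅) (by simp) (mapsTo_empty _ _)
    (fun i b => (not_topObj_lt (p i) b).elim) hi

theorem TTCInvariant.lpStep_compromisers (hrun : TTCRuns μ0 p T) (h : TTCInvariant μ0 p T x) :
    TTCInvariant μ0 p T (lpStep (compromisers μ0) p x) := by
  refine ⟨fun i b hb => cyclic_subset_cyclic_lpStep (h.owner_mem_cyclic_of_lt_lpStep hb),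
    fun i hi => ?_⟩
  by_cases hix : i ∈ cyclic μ0 x
  · rw [lpStep_compromisers_of_mem_cyclic hix]
    exact h.eq_of_mem_cyclic i hix
  · refine hrun.eq_of_mem_cyclic (fun f hf => ?_) (fun f hf => ?_)
      (fun _ _ => h.owner_mem_cyclic_of_lt_lpStep) hi
    · rw [lpStep_compromisers_of_mem_cyclic hf]
      exact h.eq_of_mem_cyclic f hf
    · rw [pointing_lpStep_of_mem_cyclic hf]
      exact (bijOn_periodicPts _).mapsTo hf

end TopTradingCycles

end HouseAllocation

/-- Proposition 3/TTC: for the house allocation constraint (the set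
of bijective allocations) and any initial ownership structure `μ0`, the top trading
cycles mechanism is a local priority mechanism. -/
theorem ttc_isLocalPriority
    {N O : Type} [Fintype N] [Fintype O] [Nonempty O]
    (μ0 : N ≃ O)
    (TTC : (N → LinearOrder O) → N → O)
    (hTTC : ∀ p, TTCRuns μ0 p (TTC p)) :
    ∃ α, lpInduces {x : N → O | Function.Bijective x} α TTC := by
  have hα := HouseAllocation.isLCA_compromisers μ0
  refine ⟨_, hα, fun p => lpRunsTo_of_invariant (fun x => (hα x).1)
    (HouseAllocation.TTCInvariant μ0 p (TTC p))
    (HouseAllocation.ttcInvariant_tau1 (hTTC p)) (fun _ h => h.lpStep_compromisers (hTTC p))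
    (fun _ h => h.lpNoFail_compromisers) (fun _ h hx => h.eq_of_bijective hx)⟩
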